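/- For all planar binary trees x = x^l ∨ x^r and y = y^l ∨ y^r, both different from the leaf |, the following recursive formula holds: x + y = { x^l ∨ z : z ∈ x^r + y } ∪ { z ∨ y^r : z ∈ x + y^l }. -/

import Mathlib

/-- A planar binary tree: a leaf `|` or a grafting `x ∨ y`. -/
inductive PBT : Type
  | leaf : PBT
  | node : PBT → PBT → PBT
  deriving DecidableEq

namespace PBT

/-- The degree: number of internal vertices. -/
def deg : PBT → ℕ
  | leaf => 0
  | node l r => deg l + deg r + 1

/-- The set `Y n` of planar binary trees of degree `n`. -/
def Y (n : ℕ) : Set PBT := {t | t.deg = n}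

/-- The `over` operation `x / y`. -/
def over' : PBT → PBT → PBT
  | x, leaf => x
  | x, node yl yr => node (over' x yl) yr

/-- The `under` operation `x \ y`. -/
def under : PBT → PBT → PBT
  | leaf, y => y
  | node xl xr, y => node xl (under xr y)

/-- The Tamari order, generated by `(x ∨ y) ∨ z ≤ x ∨ (y ∨ z)` and compatibility
with grafting on both sides. -/
inductive tle : PBT → PBT → Prop
  | refl (x : PBT) : tle x x
  | trans {x y z : PBT} : tle x y → tle y z → tle x z
  | rotate (x y z : PBT) : tle (node (node x y) z) (node x (node y z))
  | node_left {x y : PBT} (z : PBT) : tle x y → tle (node x z) (node y z)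
  | node_right {x y : PBT} (z : PBT) : tle x y → tle (node z x) (node z y)

/-- The sum of two planar binary trees: the Tamari interval `[x/y, x\y]`
(a subset of `Y (deg x + deg y)`). -/
def sum (x y : PBT) : Set PBT := {z | tle (over' x y) z ∧ tle z (under x y)}

/-- A grove of degree `n`: a nonempty subset of `Y n`. -/
def Grove (n : ℕ) (A : Set PBT) : Prop := A.Nonempty ∧ ∀ x ∈ A, x.deg = n

/-- The sum of groves. -/
def gsum (A B : Set PBT) : Set PBT := ⋃ x ∈ A, ⋃ y ∈ B, sum x y

/-- The reflection involution σ. -/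
def σ : PBT → PBT
  | leaf => leaf
  | node l r => node (σ r) (σ l)

/-- The left sum `x ⊣ y` of trees (with the conventions `x ⊣ | = {x}`, `| ⊣ y = {|}`). -/
def lsum : PBT → PBT → Set PBT
  | x, leaf => {x}
  | leaf, _ => {leaf}
  | node xl xr, y => (fun z => node xl z) '' sum xr y

/-- The right sum `x ⊢ y` of trees (with the conventions `| ⊢ y = {y}`, `x ⊢ | = {|}`). -/
def rsum : PBT → PBT → Set PBT
  | leaf, y => {y}
  | _, leaf => {leaf}
  | x, node yl yr => (fun z => node z yr) '' sum x yl

/-- Left sum of groves. -/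
def glsum (A B : Set PBT) : Set PBT := ⋃ x ∈ A, ⋃ y ∈ B, lsum x y

/-- Right sum of groves. -/
def grsum (A B : Set PBT) : Set PBT := ⋃ x ∈ A, ⋃ y ∈ B, rsum x y

/-- Multiplication of a tree by a grove:
`| × B = {|}` and `(xˡ ∨ xʳ) × B = ((xˡ × B) ⊢ B) ⊣ (xʳ × B)`.
(The conventions `{|} ⊢ B = B` and `A ⊣ {|} = A` are built into `rsum`/`lsum`.) -/
def tmul : PBT → Set PBT → Set PBT
  | leaf, _ => {leaf}
  | node l r, B => glsum (grsum (tmul l B) B) (tmul r B)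

/-- Multiplication of groves. -/
def gmul (A B : Set PBT) : Set PBT := ⋃ x ∈ A, tmul x B

end PBT

/-!
Cut the right arm of a tree at one of its vertices: this writes it as `p \ (c ∨ r)`. If
`p \ (c ∨ r) ≤ u` in the Tamari order, then `u` has a cut `P \ (C ∨ R)` with `p \ c ≤ P \ C` and
`r ≤ R`. For `p = |` this describes the trees above `c ∨ r`; allowing any `p` is what makes
the induction on the Tamari order go through (transitivity becomes trivial).

Let `z = zˡ ∨ zʳ` lie between `x / y` and `x \ y`. Apply this to `z ≤ x \ y` and to the mirror
image `σz ≤ σy \ σx`. If `deg zˡ < deg x`, degree counting puts both cuts at the root of `x`,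
so `zˡ = xˡ` and `zʳ ∈ xʳ + y`. Otherwise `σz` is in that situation with respect to `σy` and `σx`.
-/

namespace PBT

lemma deg_under (x y : PBT) : deg (under x y) = deg x + deg y := by
  induction x with
  | leaf => simp [under, deg]
  | node l r _ ih => simp only [under, deg, ih]; omega

@[simp] lemma under_leaf (t : PBT) : under t leaf = t := by
  induction t with
  | leaf => rfl
  | node l r _ ih => simp [under, ih]

lemma tle.deg_eq {a b : PBT} (h : tle a b) : deg a = deg b := by
  induction h <;> (try simp only [deg] at *) <;> omega

def rightDegSum : PBT → ℕ
  | leaf => 0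
  | node l r => rightDegSum l + rightDegSum r + deg r

lemma tle.eq_or_rightDegSum_lt {a b : PBT} (h : tle a b) :
    a = b ∨ rightDegSum a < rightDegSum b := by
  induction h with
  | refl => exact .inl rfl
  | trans _ _ ih₁ ih₂ =>
    rcases ih₁ with rfl | h₁
    · exact ih₂
    · rcases ih₂ with rfl | h₂
      · exact .inr h₁
      · exact .inr (h₁.trans h₂)
  | rotate x y z => right; simp only [rightDegSum, deg]; omega
  | node_left z _ ih =>
    rcases ih with rfl | h
    · exact .inl rfl
    · right; simp only [rightDegSum]; omega
  | node_right z hxy ih =>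
    rcases ih with rfl | h
    · exact .inl rfl
    · right; simp only [rightDegSum, hxy.deg_eq]; omega

lemma tle_antisymm {a b : PBT} (hab : tle a b) (hba : tle b a) : a = b := by
  rcases hab.eq_or_rightDegSum_lt with h | h₁
  · exact h
  · rcases hba.eq_or_rightDegSum_lt with h | h₂
    · exact h.symm
    · omega

@[simp] lemma σ_σ (t : PBT) : σ (σ t) = t := by
  induction t with
  | leaf => rfl
  | node l r ihl ihr => simp [σ, ihl, ihr]

lemma σ_injective : Function.Injective σ :=
  Function.LeftInverse.injective σ_σ

lemma deg_σ (t : PBT) : deg (σ t) = deg t := by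
  induction t with
  | leaf => rfl
  | node l r ihl ihr => simp only [σ, deg, ihl, ihr]; omega

lemma σ_over (x y : PBT) : σ (over' x y) = under (σ y) (σ x) := by
  induction y with
  | leaf => rfl
  | node l r ihl _ => simp [over', under, σ, ihl]

lemma σ_under (x y : PBT) : σ (under x y) = over' (σ y) (σ x) := by
  simpa using (congrArg σ (σ_over (σ y) (σ x))).symm

lemma tle_σ_of_tle {a b : PBT} (h : tle a b) : tle (σ b) (σ a) := by
  induction h with
  | refl => exact .refl _
  | trans _ _ ih₁ ih₂ => exact ih₂.trans ih₁
  | rotate x y z => exact .rotate (σ z) (σ y) (σ x)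
  | node_left z _ ih => exact .node_right _ ih
  | node_right z _ ih => exact .node_left _ ih

lemma tle_σ_iff {a b : PBT} : tle (σ a) (σ b) ↔ tle b a :=
  ⟨fun h => by simpa using tle_σ_of_tle h, tle_σ_of_tle⟩

lemma mem_sum_iff_σ_mem {x y z : PBT} : z ∈ sum x y ↔ σ z ∈ sum (σ y) (σ x) := by
  simp only [sum, Set.mem_ofPred_eq, ← σ_over, ← σ_under, tle_σ_iff]
  exact and_comm

lemma deg_of_mem_sum {x y z : PBT} (hz : z ∈ sum x y) : deg z = deg x + deg y := by
  rw [hz.2.deg_eq, deg_under]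

lemma node_under_tle_under_node (p c r : PBT) :
    tle (node (under p c) r) (under p (node c r)) := by
  induction p with
  | leaf => exact .refl _
  | node a b _ ih => exact (tle.rotate a (under b c) r).trans (.node_right a ih)

lemma over_node_tle_node_over (xl xr y : PBT) :
    tle (over' (node xl xr) y) (node xl (over' xr y)) := by
  rw [← tle_σ_iff]
  simpa [σ, σ_over] using node_under_tle_under_node (σ y) (σ xr) (σ xl)

lemma tle.exists_of_under_node {p c r u : PBT} (h : tle (under p (node c r)) u) :
    ∃ P C R, u = under P (node C R) ∧ tle (under p c) (under P C) ∧ tle r R := by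
  generalize ht : under p (node c r) = t at h
  induction h generalizing p c r with
  | refl => exact ⟨p, c, r, ht.symm, .refl _, .refl _⟩
  | trans _ _ ih₁ ih₂ =>
    obtain ⟨P, C, R, rfl, hC, hR⟩ := ih₁ ht
    obtain ⟨P', C', R', rfl, hC', hR'⟩ := ih₂ rfl
    exact ⟨P', C', R', rfl, hC.trans hC', hR.trans hR'⟩
  | rotate x y z =>
    cases p with
    | leaf =>
      obtain ⟨rfl, rfl⟩ := node.inj ht
      exact ⟨node x leaf, y, _, rfl, .refl _, .refl _⟩
    | node p₁ p₂ =>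
      obtain ⟨rfl, rfl⟩ := node.inj ht
      exact ⟨node x (node y p₂), c, r, rfl, .rotate _ _ _, .refl _⟩
  | @node_left x y z hxy _ =>
    cases p with
    | leaf =>
      obtain ⟨rfl, rfl⟩ := node.inj ht
      exact ⟨leaf, y, _, rfl, hxy, .refl _⟩
    | node p₁ p₂ =>
      obtain ⟨rfl, rfl⟩ := node.inj ht
      exact ⟨node y p₂, c, r, rfl, .node_left _ hxy, .refl _⟩
  | @node_right x y z hxy ih =>
    cases p with
    | leaf =>
      obtain ⟨rfl, rfl⟩ := node.inj ht
      exact ⟨leaf, _, y, rfl, .refl _, hxy⟩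
    | node p₁ p₂ =>
      obtain ⟨rfl, hx⟩ := node.inj ht
      obtain ⟨P, C, R, rfl, hC, hR⟩ := ih hx
      exact ⟨node _ P, C, R, rfl, .node_right _ hC, hR⟩

lemma tle.exists_of_node {c r u : PBT} (h : tle (node c r) u) :
    ∃ P C R, u = under P (node C R) ∧ tle c (under P C) ∧ tle r R :=
  tle.exists_of_under_node (p := leaf) h

lemma under_node_eq_under {p c r x y : PBT} (h : under p (node c r) = under x y) :
    (∃ r₀, x = under p (node c r₀) ∧ r = under r₀ y) ∨
      ∃ p₀, y = under p₀ (node c r) ∧ p = under x p₀ := by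
  induction x generalizing p with
  | leaf => exact .inr ⟨p, h.symm, rfl⟩
  | node a b _ ih =>
    cases p with
    | leaf =>
      simp only [under, node.injEq] at h
      obtain ⟨rfl, rfl⟩ := h
      exact .inl ⟨b, rfl, rfl⟩
    | node p₁ p₂ =>
      simp only [under, node.injEq] at h
      obtain ⟨rfl, h⟩ := h
      rcases ih h with ⟨r₀, rfl, rfl⟩ | ⟨p₀, rfl, rfl⟩
      · exact .inl ⟨r₀, rfl, rfl⟩
      · exact .inr ⟨p₀, rfl, rfl⟩

lemma node_eq_under_node {a b p c r : PBT} (h : node a b = under p (node c r)) :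
    (p = leaf ∧ a = c ∧ b = r) ∨ deg r < deg b := by
  cases p with
  | leaf =>
    obtain ⟨rfl, rfl⟩ := node.inj h
    exact .inl ⟨rfl, rfl, rfl⟩
  | node p₁ p₂ =>
    obtain ⟨-, rfl⟩ := node.inj h
    right
    simp only [deg_under, deg]
    omega

lemma left_eq_and_mem_sum_of_node_mem_sum {xl xr y zl zr : PBT}
    (hz : node zl zr ∈ sum (node xl xr) y) (hdeg : deg zl < deg (node xl xr)) :
    zl = xl ∧ zr ∈ sum xr y := by
  obtain ⟨hlo, hhi⟩ := hz
  obtain ⟨p, c, r, hu, hzl, hzr⟩ := hhi.exists_of_node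
  have hσ : tle (node (σ zr) (σ zl)) (under (σ y) (node (σ xr) (σ xl))) := by
    simpa [σ, σ_over] using tle_σ_of_tle hlo
  obtain ⟨p', c', r', hu', hzr', hzl'⟩ := hσ.exists_of_node
  have dl := hzl.deg_eq
  have dr := hzr.deg_eq
  have dl' := hzl'.deg_eq
  have dr' := hzr'.deg_eq
  simp only [deg_under, deg_σ] at dl dr dl' dr'
  obtain ⟨r₀, hx, rfl⟩ : ∃ r₀, node xl xr = under p (node c r₀) ∧ r = under r₀ y := by
    rcases under_node_eq_under hu.symm with h | ⟨p₀, -, rfl⟩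
    · exact h
    · simp only [deg_under, deg] at dl hdeg
      omega
  obtain ⟨p₀', hx', rfl⟩ :
      ∃ p₀', node (σ xr) (σ xl) = under p₀' (node c' r') ∧ p' = under (σ y) p₀' := by
    rcases under_node_eq_under hu'.symm with ⟨r₁, hy, -⟩ | h
    · have := congrArg deg hy
      simp only [deg_under, deg, deg_σ] at this dr
      omega
    · exact h
  have hr' : deg r' ≤ deg xl := by
    rcases node_eq_under_node hx' with ⟨-, -, rfl⟩ | h
    · exact (deg_σ xl).le
    · rw [deg_σ] at h
      exact h.le
  obtain ⟨rfl, rfl, rfl⟩ : p = leaf ∧ xl = c ∧ xr = r₀ := by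
    refine (node_eq_under_node hx).resolve_right fun h => ?_
    have := congrArg deg hx
    simp only [deg, deg_under] at this dl
    omega
  obtain ⟨rfl, rfl, rfl⟩ : p₀' = leaf ∧ σ xr = c' ∧ σ xl = r' := by
    refine (node_eq_under_node hx').resolve_right fun h => ?_
    simp only [deg_σ, deg] at h dl
    omega
  refine ⟨tle_antisymm hzl (tle_σ_iff.1 hzl'), ?_, hzr⟩
  rw [← tle_σ_iff, σ_over]
  simpa using hzr'

end PBT

open PBT in
/-- for `x = xˡ ∨ xʳ` and `y = yˡ ∨ yʳ`,
`x + y = {xˡ ∨ z : z ∈ xʳ + y} ∪ {z ∨ yʳ : z ∈ x + yˡ}`. -/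
theorem sum_rec (xl xr yl yr : PBT) :
    PBT.sum (node xl xr) (node yl yr) =
      ((fun z => node xl z) '' PBT.sum xr (node yl yr)) ∪
      ((fun z => node z yr) '' PBT.sum (node xl xr) yl) := by
  ext z
  constructor
  · intro hz
    obtain ⟨zl, zr, rfl⟩ : ∃ zl zr, z = node zl zr := by
      cases z with
      | leaf =>
        have := deg_of_mem_sum hz
        simp only [deg] at this
        omega
      | node zl zr => exact ⟨zl, zr, rfl⟩
    by_cases hdeg : deg zl < deg (node xl xr)
    · obtain ⟨rfl, hzr⟩ := left_eq_and_mem_sum_of_node_mem_sum hz hdeg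
      exact .inl ⟨zr, hzr, rfl⟩
    · have hσ : node (σ zr) (σ zl) ∈ sum (node (σ yr) (σ yl)) (σ (node xl xr)) :=
        mem_sum_iff_σ_mem.1 hz
      have hdeg' : deg (σ zr) < deg (node (σ yr) (σ yl)) := by
        have := deg_of_mem_sum hz
        simp only [deg, deg_σ] at this hdeg ⊢
        omega
      obtain ⟨hzr, hzl⟩ := left_eq_and_mem_sum_of_node_mem_sum hσ hdeg'
      rw [σ_injective hzr]
      exact .inr ⟨zl, mem_sum_iff_σ_mem.2 hzl, rfl⟩
  · rintro (⟨v, hv, rfl⟩ | ⟨v, hv, rfl⟩)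
    · exact ⟨(over_node_tle_node_over xl xr _).trans (.node_right xl hv.1), .node_right xl hv.2⟩
    · exact ⟨.node_left yr hv.1, (tle.node_left yr hv.2).trans (node_under_tle_under_node _ _ _)⟩
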